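/- arXiv:2112.05252 — 10 statements merged into one kernel-verified Lean document; each statement's English description precedes it below -/
import Mathlib

section
/- Let {v_1,...,v_n} and {v'_1,...,v'_l} together be n+l linearly independent vectors in R^m (with m ≥ max(n,l), n > 0), and let {u_1,...,u_n} be arbitrary vectors in R^m. Then for any r > 0 there exists ε with 0 < ε < r such that the vectors {u_1 + ε v_1, ..., u_n + ε v_n, v'_1, ..., v'_l} are n+l linearly independent vectors. -/
/-!
Over an ordered field, rows are linearly independent iff their Gram determinant is nonzero. The
Gram determinant of the rows `v i + t • u i`, `v' j` is a polynomial in `t`, nonzero at `t = 0`,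
so all but finitely many `t` keep the family independent. Choosing such a `t > r⁻¹` and putting
`ε = t⁻¹`, the family `u i + ε • v i`, `v' j` is a rescaling of an independent one.
-/

open Matrix Polynomial

theorem Matrix.linearIndependent_rows_iff_rank_eq_card {K ι κ : Type*} [Field K] [Fintype ι]
    [Fintype κ] (A : Matrix ι κ K) : LinearIndependent K A.row ↔ A.rank = Fintype.card ι := by
  rw [A.rank_eq_finrank_span_row, linearIndependent_iff_card_eq_finrank_span, Set.finrank, eq_comm]

section OrderedField

variable {K : Type*} [Field K] [LinearOrder K] [IsStrictOrderedRing K]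

theorem Matrix.linearIndependent_rows_iff_det_mul_transpose_ne_zero {ι κ : Type*} [Fintype ι]
    [DecidableEq ι] [Fintype κ] (B : Matrix ι κ K) :
    LinearIndependent K B.row ↔ (B * Bᵀ).det ≠ 0 := by
  rw [linearIndependent_rows_iff_rank_eq_card, ← rank_self_mul_transpose,
    ← linearIndependent_rows_iff_rank_eq_card, linearIndependent_rows_iff_isUnit,
    isUnit_iff_isUnit_det, isUnit_iff_ne_zero]

theorem finite_setOf_not_linearIndependent_add_smul {ι κ : Type*} [Fintype ι] [Fintype κ]
    {f g : ι → κ → K} (hf : LinearIndependent K f) :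
    {t : K | ¬ LinearIndependent K (fun i => f i + t • g i)}.Finite := by
  classical
  let W : Matrix ι κ K[X] := Matrix.of fun i j => C (f i j) + X * C (g i j)
  have eval_W : ∀ t : K, W.map (eval t) = Matrix.of fun i => f i + t • g i := fun t => by
    ext i j
    simp only [W, map_apply, of_apply, eval_add, eval_mul, eval_C, eval_X, Pi.add_apply,
      Pi.smul_apply, smul_eq_mul]
  have eval_gram : ∀ t : K, (W * Wᵀ).det.eval t =
      (Matrix.of (fun i => f i + t • g i) * (Matrix.of (fun i => f i + t • g i))ᵀ).det := by
    intro t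
    rw [← coe_evalRingHom, RingHom.map_det, RingHom.mapMatrix_apply, Matrix.map_mul,
      Matrix.transpose_map, coe_evalRingHom, eval_W]
  have gram_ne_zero : (W * Wᵀ).det ≠ 0 := fun h0 => by
    have := eval_gram 0
    simp only [h0, eval_zero, zero_smul, add_zero] at this
    exact (linearIndependent_rows_iff_det_mul_transpose_ne_zero (Matrix.of f)).mp hf this.symm
  refine (finite_setOfPred_isRoot gram_ne_zero).subset fun t ht => ?_
  rw [Set.mem_ofPred_eq, IsRoot, eval_gram, ← not_ne_iff,
    ← linearIndependent_rows_iff_det_mul_transpose_ne_zero]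
  exact ht

end OrderedField

theorem LinearIndependent.sum_elim_smul_left {K ι ι' M : Type*} [Field K] [AddCommGroup M]
    [Module K M] {f : ι → M} {g : ι' → M} (h : LinearIndependent K (Sum.elim f g)) {c : K}
    (hc : c ≠ 0) :
    LinearIndependent K (Sum.elim (fun i => c • f i) g) := by
  convert h.units_smul (Sum.elim (fun _ => Units.mk0 c hc) 1) using 1
  ext (i | i) <;> simp

theorem stmt2_general (m n l : ℕ)
    (v : Fin n → (Fin m → ℝ)) (v' : Fin l → (Fin m → ℝ)) (u : Fin n → (Fin m → ℝ))
    (h : LinearIndependent ℝ (Sum.elim v v')) (r : ℝ) (hr : 0 < r) :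
    ∃ ε : ℝ, 0 < ε ∧ ε < r ∧
      LinearIndependent ℝ (Sum.elim (fun i => u i + ε • v i) v') := by
  obtain ⟨δ, hδr, hδ⟩ := ((Set.Ioi_infinite r⁻¹).sdiff
    (finite_setOf_not_linearIndependent_add_smul (g := Sum.elim u 0) h)).nonempty
  have hδ_pos : 0 < δ := (inv_pos.mpr hr).trans hδr
  have hδ_li : LinearIndependent ℝ (Sum.elim (fun i => v i + δ • u i) v') := by
    have perturbed_eq : (fun i => Sum.elim v v' i + δ • Sum.elim u 0 i) =
        Sum.elim (fun i => v i + δ • u i) v' := by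
      ext (i | i) <;> simp
    exact perturbed_eq ▸ not_not.mp hδ
  refine ⟨δ⁻¹, inv_pos.mpr hδ_pos, (inv_lt_comm₀ hδ_pos hr).mpr hδr, ?_⟩
  have rescaled_eq : (fun i => u i + δ⁻¹ • v i) = fun i => δ⁻¹ • (v i + δ • u i) := by
    ext1 i
    rw [smul_add, inv_smul_smul₀ hδ_pos.ne', add_comm]
  exact rescaled_eq ▸ hδ_li.sum_elim_smul_left (inv_ne_zero hδ_pos.ne')

/-- Perturbed linear independence: if `v₁,…,v_n, v'₁,…,v'_l` are `n+l` linearly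
independent vectors in `ℝ^m` and `u₁,…,u_n` are arbitrary, then for any `r > 0`
there is `0 < ε < r` such that `u₁+εv₁,…,u_n+εv_n, v'₁,…,v'_l` are linearly independent. -/
theorem stmt2 (m n l : ℕ) (hm : max n l ≤ m) (hn : 0 < n)
    (v : Fin n → (Fin m → ℝ)) (v' : Fin l → (Fin m → ℝ)) (u : Fin n → (Fin m → ℝ))
    (h : LinearIndependent ℝ (Sum.elim v v')) (r : ℝ) (hr : 0 < r) :
    ∃ ε : ℝ, 0 < ε ∧ ε < r ∧
      LinearIndependent ℝ (Sum.elim (fun i => u i + ε • v i) v') :=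
  stmt2_general m n l v v' u h r hr
end

section
/- Let n_1,...,n_k be positive integers with n_i ≥ 2 for all i, and N = n_1 + ... + n_k. For each l ∈ [k], let U^l be the set of block vectors in R^N that are zero in all blocks except block l, where they equal e_i - e_{i+1} for i ∈ [n_l - 1]; and let V be the set of k block vectors that equal e_1 in block i and -e_1 in block i+1 (cyclically, with k+1 → 1) and zero elsewhere. Then the N vectors in (∪_{l=1}^k U^l) ∪ V are affinely independent. -/
/-!
Every vector of the family has the form `e_a - e_b`. Given an affine dependence `∑ w • v = 0`
with `∑ w = 0`, sum the coordinates over a set `S` of positions: an edge `e_a - e_b` contributes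
`[a ∈ S] - [b ∈ S]`. Taking for `S` the positions of block `l` strictly after `i` isolates the
path edge `e_i - e_{i+1}` of block `l`, so all path weights vanish. Taking for `S` a whole block
`l + 1` kills the path edges and shows that consecutive link weights agree, so they are all equal
to some `c`; then `∑ w = k c = 0` forces `c = 0`.
-/

open Finset

section CoordSum

variable {R α : Type*}

def coordSum [Semiring R] (S : Finset α) : (α → R) →ₗ[R] R := ∑ q ∈ S, LinearMap.proj q

lemma coordSum_apply [Semiring R] (S : Finset α) (x : α → R) : coordSum S x = ∑ q ∈ S, x q := by
  simp [coordSum]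

lemma coordSum_single_sub_single [Ring R] [DecidableEq α] (S : Finset α) (a b : α) :
    coordSum S (Pi.single a 1 - Pi.single b 1 : α → R) =
      (if a ∈ S then 1 else 0) - if b ∈ S then 1 else 0 := by
  simp [coordSum_apply, sum_sub_distrib, sum_pi_single']

end CoordSum

lemma Fin.apply_eq_apply_zero_of_forall_apply_add_one {β : Type*} {k : ℕ} [NeZero k]
    {b : Fin k → β} (h : ∀ l, b (l + 1) = b l) (l : Fin k) : b l = b 0 := by
  obtain ⟨m, rfl⟩ := Nat.exists_eq_succ_of_ne_zero (NeZero.ne k)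
  induction l using Fin.induction with
  | zero => rfl
  | succ i ih => rw [← Fin.coeSucc_eq_succ, h, ih]

namespace BlockFamily

variable (R : Type*) [Ring R] {k : ℕ} {n : Fin k → ℕ}

def pathEdge (p : Σ l : Fin k, Fin (n l - 1)) : (Σ l : Fin k, Fin (n l)) → R :=
  Pi.single (⟨p.1, ⟨p.2, Nat.lt_of_lt_pred p.2.2⟩⟩ : Σ l : Fin k, Fin (n l)) 1
    - Pi.single (⟨p.1, ⟨p.2 + 1, Nat.add_lt_of_lt_sub p.2.2⟩⟩ : Σ l : Fin k, Fin (n l)) 1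

def linkEdge [NeZero k] (hn : ∀ l, 2 ≤ n l) (l : Fin k) : (Σ l : Fin k, Fin (n l)) → R :=
  Pi.single (⟨l, ⟨0, Nat.zero_lt_of_lt (hn l)⟩⟩ : Σ l : Fin k, Fin (n l)) 1
    - Pi.single (⟨l + 1, ⟨0, Nat.zero_lt_of_lt (hn (l + 1))⟩⟩ : Σ l : Fin k, Fin (n l)) 1

def tailCut (l₀ : Fin k) (i₀ : ℕ) : Finset (Σ l : Fin k, Fin (n l)) :=
  univ.filter fun q => q.1 = l₀ ∧ i₀ < q.2.1

def blockCut (l₀ : Fin k) : Finset (Σ l : Fin k, Fin (n l)) :=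
  univ.filter fun q => q.1 = l₀

variable {R}

lemma coordSum_tailCut_pathEdge (l₀ : Fin k) (i₀ : Fin (n l₀ - 1))
    (p : Σ l : Fin k, Fin (n l - 1)) :
    coordSum (tailCut l₀ i₀) (pathEdge R p) = -if p = ⟨l₀, i₀⟩ then 1 else 0 := by
  obtain ⟨l, i⟩ := p
  rcases eq_or_ne l l₀ with rfl | hl
  · simp only [tailCut, pathEdge, coordSum_single_sub_single, mem_filter, mem_univ, true_and,
      Sigma.mk.inj_iff, heq_eq_eq, Fin.ext_iff]
    split_ifs <;> grind
  · simp [coordSum_single_sub_single, tailCut, pathEdge, hl]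

lemma coordSum_blockCut_pathEdge (l₀ : Fin k) (p : Σ l : Fin k, Fin (n l - 1)) :
    coordSum (blockCut l₀) (pathEdge R p) = 0 := by
  simp [coordSum_single_sub_single, blockCut, pathEdge]

variable [NeZero k] {hn : ∀ l, 2 ≤ n l}

lemma coordSum_tailCut_linkEdge (l₀ : Fin k) (i₀ : ℕ) (l : Fin k) :
    coordSum (tailCut l₀ i₀) (linkEdge R hn l) = 0 := by
  simp [coordSum_single_sub_single, tailCut, linkEdge]

lemma coordSum_blockCut_linkEdge (l₀ l : Fin k) :
    coordSum (blockCut l₀) (linkEdge R hn l) =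
      (if l = l₀ then 1 else 0) - if l + 1 = l₀ then 1 else 0 := by
  simp [coordSum_single_sub_single, blockCut, linkEdge]

variable {a : (Σ l : Fin k, Fin (n l - 1)) → R} {b : Fin k → R}

lemma pathWeight_eq_zero (h : ∑ p, a p • pathEdge R p + ∑ l, b l • linkEdge R hn l = 0)
    (p : Σ l : Fin k, Fin (n l - 1)) : a p = 0 := by
  obtain ⟨l₀, i₀⟩ := p
  have := congrArg (coordSum (tailCut l₀ i₀)) h
  simp only [map_add, map_sum, map_smul, map_zero, smul_eq_mul, coordSum_tailCut_pathEdge,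
    coordSum_tailCut_linkEdge] at this
  simpa using this

lemma linkWeight_add_one (h : ∑ p, a p • pathEdge R p + ∑ l, b l • linkEdge R hn l = 0)
    (l : Fin k) : b (l + 1) = b l := by
  have := congrArg (coordSum (blockCut (l + 1))) h
  simp only [map_add, map_sum, map_smul, map_zero, smul_eq_mul, coordSum_blockCut_pathEdge,
    coordSum_blockCut_linkEdge, add_left_inj] at this
  simpa [mul_sub, sum_sub_distrib, sub_eq_zero] using this

theorem affineIndependent_sumElim_pathEdge_linkEdge [NoZeroDivisors R] [CharZero R] :
    AffineIndependent R (Sum.elim (pathEdge R) (linkEdge R hn)) := by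
  rw [affineIndependent_iff_of_fintype]
  intro w hw hcomb
  rw [Finset.weightedVSub_eq_linear_combination _ hw, Fintype.sum_sum_type] at hcomb
  rw [Fintype.sum_sum_type] at hw
  simp only [Sum.elim_inl, Sum.elim_inr] at hcomb
  have hpath := pathWeight_eq_zero hcomb
  have hlink := Fin.apply_eq_apply_zero_of_forall_apply_add_one (linkWeight_add_one hcomb)
  have hlink0 : w (.inr 0) = 0 := by
    simpa [hpath, hlink, NeZero.ne k] using hw
  rintro (p | l)
  · exact hpath p
  · rw [hlink, hlink0]

end BlockFamily

/-- Block vectors: within each block `l` of size `n l ≥ 2`, the vectors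
`e_i - e_{i+1}` for `i ∈ [n l - 1]`, together with the `k` cyclic "linking"
vectors `e_1` (block `l`) minus `e_1` (block `l+1`), form `N = ∑ n l`
affinely independent vectors in `ℝ^N`. -/
theorem stmt5 (k : ℕ) [NeZero k] (n : Fin k → ℕ) (hn : ∀ l, 2 ≤ n l) :
    AffineIndependent ℝ
      (Sum.elim
        (fun p : Σ l : Fin k, Fin (n l - 1) =>
          (Pi.single (⟨p.1, ⟨p.2.1, by have := p.2.2; omega⟩⟩ : Σ l : Fin k, Fin (n l)) (1 : ℝ)
            - Pi.single (⟨p.1, ⟨p.2.1 + 1, by have := p.2.2; omega⟩⟩ : Σ l : Fin k, Fin (n l)) 1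
            : (Σ l : Fin k, Fin (n l)) → ℝ))
        (fun l : Fin k =>
          (Pi.single (⟨l, ⟨0, by have := hn l; omega⟩⟩ : Σ l : Fin k, Fin (n l)) (1 : ℝ)
            - Pi.single (⟨l + 1, ⟨0, by have := hn (l + 1); omega⟩⟩ : Σ l : Fin k, Fin (n l)) 1
            : (Σ l : Fin k, Fin (n l)) → ℝ))) :=
  BlockFamily.affineIndependent_sumElim_pathEdge_linkEdge (hn := hn)
end

section
/- The set χ is the projection onto the (x,y)-space of the lifted set χ^L; consequently conv(χ) = proj_{(x,y)} conv(χ^L). -/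
/-- `χ` is the projection of the lifted set `χ^L` onto the `(x,y)`-space, and
consequently `conv(χ)` is the projection of `conv(χ^L)`. -/
theorem stmt7 (m n : ℕ) (c : Fin n → ℝ) (hc : ∀ j, 0 < c j)
    (d : Fin m → Fin n → ℝ) (hd : ∀ i j, 0 ≤ d i j) :
    (fun p : (Fin m → Fin n → ℝ) × (Fin n → ℝ) × (Fin m → Fin n → ℝ) => (p.1, p.2.1)) ''
        {p : (Fin m → Fin n → ℝ) × (Fin n → ℝ) × (Fin m → Fin n → ℝ) |
          (∀ j, ∑ i, p.1 i j ≤ c j * p.2.1 j) ∧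
          (∀ i, ∑ j, p.1 i j ≤ ∑ j, d i j * p.2.2 i j) ∧
          (∀ i, ∑ j, p.2.2 i j ≤ 1) ∧
          (∀ i j, p.2.2 i j ≤ p.2.1 j) ∧
          (∀ i j, 0 ≤ p.1 i j) ∧ (∀ i j, 0 ≤ p.2.2 i j) ∧
          (∀ j, p.2.1 j = 0 ∨ p.2.1 j = 1)} =
      {p : (Fin m → Fin n → ℝ) × (Fin n → ℝ) |
          (∀ j, ∑ i, p.1 i j ≤ c j * p.2 j) ∧
          (∀ i, ∑ j, p.1 i j ≤ ⨆ j, d i j * p.2 j) ∧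
          (∀ i j, 0 ≤ p.1 i j) ∧
          (∀ j, p.2 j = 0 ∨ p.2 j = 1)} ∧
    (fun p : (Fin m → Fin n → ℝ) × (Fin n → ℝ) × (Fin m → Fin n → ℝ) => (p.1, p.2.1)) ''
        convexHull ℝ {p : (Fin m → Fin n → ℝ) × (Fin n → ℝ) × (Fin m → Fin n → ℝ) |
          (∀ j, ∑ i, p.1 i j ≤ c j * p.2.1 j) ∧
          (∀ i, ∑ j, p.1 i j ≤ ∑ j, d i j * p.2.2 i j) ∧
          (∀ i, ∑ j, p.2.2 i j ≤ 1) ∧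
          (∀ i j, p.2.2 i j ≤ p.2.1 j) ∧
          (∀ i j, 0 ≤ p.1 i j) ∧ (∀ i j, 0 ≤ p.2.2 i j) ∧
          (∀ j, p.2.1 j = 0 ∨ p.2.1 j = 1)} =
      convexHull ℝ {p : (Fin m → Fin n → ℝ) × (Fin n → ℝ) |
          (∀ j, ∑ i, p.1 i j ≤ c j * p.2 j) ∧
          (∀ i, ∑ j, p.1 i j ≤ ⨆ j, d i j * p.2 j) ∧
          (∀ i j, 0 ≤ p.1 i j) ∧
          (∀ j, p.2 j = 0 ∨ p.2 j = 1)} := by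
  have hlin : IsLinearMap ℝ
      (fun p : (Fin m → Fin n → ℝ) × (Fin n → ℝ) × (Fin m → Fin n → ℝ) => (p.1, p.2.1)) :=
    ⟨fun a b => rfl, fun a b => rfl⟩
  have key : (fun p : (Fin m → Fin n → ℝ) × (Fin n → ℝ) × (Fin m → Fin n → ℝ) => (p.1, p.2.1)) ''
        {p : (Fin m → Fin n → ℝ) × (Fin n → ℝ) × (Fin m → Fin n → ℝ) |
          (∀ j, ∑ i, p.1 i j ≤ c j * p.2.1 j) ∧
          (∀ i, ∑ j, p.1 i j ≤ ∑ j, d i j * p.2.2 i j) ∧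
          (∀ i, ∑ j, p.2.2 i j ≤ 1) ∧
          (∀ i j, p.2.2 i j ≤ p.2.1 j) ∧
          (∀ i j, 0 ≤ p.1 i j) ∧ (∀ i j, 0 ≤ p.2.2 i j) ∧
          (∀ j, p.2.1 j = 0 ∨ p.2.1 j = 1)} =
      {p : (Fin m → Fin n → ℝ) × (Fin n → ℝ) |
          (∀ j, ∑ i, p.1 i j ≤ c j * p.2 j) ∧
          (∀ i, ∑ j, p.1 i j ≤ ⨆ j, d i j * p.2 j) ∧
          (∀ i j, 0 ≤ p.1 i j) ∧
          (∀ j, p.2 j = 0 ∨ p.2 j = 1)} := by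
    ext ⟨x, y⟩
    simp only [Set.mem_image, Set.mem_setOf_eq, Prod.mk.injEq, Prod.exists]
    constructor
    · rintro ⟨x', y', q, ⟨h1, h2, h3, h4, h5, h6, h7⟩, rfl, rfl⟩
      refine ⟨h1, fun i => ?_, h5, h7⟩
      rcases Nat.eq_zero_or_pos n with hn | hn
      · subst hn
        simp [ciSup_of_empty, Real.sSup_empty]
      · haveI : Nonempty (Fin n) := ⟨⟨0, hn⟩⟩
        have hsup0 : 0 ≤ ⨆ j, d i j * y' j := by
          refine le_ciSup_of_le (Set.finite_range _).bddAbove (⟨0, hn⟩ : Fin n) ?_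
          rcases h7 ⟨0, hn⟩ with h | h
          · simp [h]
          · simpa [h] using hd i _
        refine (h2 i).trans ?_
        have hterm : ∀ j, d i j * q i j ≤ q i j * ⨆ j', d i j' * y' j' := by
          intro j
          rcases h7 j with h | h
          · have : q i j = 0 := le_antisymm (by simpa [h] using h4 i j) (h6 i j)
            simp [this]
          · calc d i j * q i j = q i j * (d i j * y' j) := by rw [h]; ring
              _ ≤ q i j * ⨆ j', d i j' * y' j' :=
                mul_le_mul_of_nonneg_left
                  (le_ciSup (f := fun j' => d i j' * y' j') (Set.finite_range _).bddAbove j) (h6 i j)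
        calc ∑ j, d i j * q i j ≤ ∑ j, q i j * ⨆ j', d i j' * y' j' :=
              Finset.sum_le_sum fun j _ => hterm j
          _ = (∑ j, q i j) * ⨆ j', d i j' * y' j' := by rw [Finset.sum_mul]
          _ ≤ 1 * ⨆ j', d i j' * y' j' :=
              mul_le_mul_of_nonneg_right (h3 i) hsup0
          _ = _ := one_mul _
    · rintro ⟨h1, h2, h3, h4⟩
      rcases Nat.eq_zero_or_pos n with hn | hn
      · subst hn
        refine ⟨x, y, fun _ _ => 0, ⟨fun j => j.elim0, fun i => ?_, by simp, fun i j => j.elim0,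
          h3, by simp, fun j => j.elim0⟩, rfl, rfl⟩
        simp
      · haveI : Nonempty (Fin n) := ⟨⟨0, hn⟩⟩
        have hy01 : ∀ j, 0 ≤ y j := fun j => by rcases h4 j with h | h <;> simp [h]
        have hy1 : ∀ j, y j ≤ 1 := fun j => by rcases h4 j with h | h <;> simp [h]
        choose jm hjm using fun i =>
          Finite.exists_max (fun j : Fin n => d i j * y j)
        refine ⟨x, y, fun i j => if j = jm i then y (jm i) else 0,
          ⟨h1, fun i => ?_, fun i => by simp [hy1], fun i j => ?_, h3, fun i j => ?_, h4⟩,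
          rfl, rfl⟩
        · refine (h2 i).trans ?_
          have : (⨆ j, d i j * y j) ≤ d i (jm i) * y (jm i) :=
            ciSup_le fun j => hjm i j
          refine this.trans (le_of_eq ?_)
          rw [Finset.sum_eq_single (jm i)]
          · simp
          · intro b _ hb; simp [hb]
          · simp
        · by_cases h : j = jm i <;> simp [h, hy01]
        · by_cases h : j = jm i <;> simp [h, hy01]
  refine ⟨key, ?_⟩
  rw [hlin.image_convexHull, key]
end

section
/- For any (x̂, ŷ) ∈ χ with ŷ having at least one nonzero entry, defining q̂ by q̂_{i,k_i} = 1 where k_i ∈ argmax_{j: ŷ_j = 1} d_{ij} and q̂_{ij} = 0 otherwise, the point (x̂, ŷ, q̂) belongs to χ^L. -/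
/-- For `(x̂, ŷ) ∈ χ` with `ŷ ≠ 0`, choosing for each `i` an index `k i` attaining
`max_{j : ŷ_j = 1} d_{ij}` and setting `q̂_{i,k i} = 1`, `q̂_{ij} = 0` otherwise,
gives a point `(x̂, ŷ, q̂) ∈ χ^L`. -/
theorem stmt9 (m n : ℕ) (c : Fin n → ℝ) (hc : ∀ j, 0 < c j)
    (d : Fin m → Fin n → ℝ) (hd : ∀ i j, 0 ≤ d i j)
    (x : Fin m → Fin n → ℝ) (y : Fin n → ℝ)
    (hy : ∀ j, y j = 0 ∨ y j = 1) (hy1 : ∃ j, y j = 1)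
    (hx1 : ∀ j, ∑ i, x i j ≤ c j * y j)
    (hx2 : ∀ i, ∑ j, x i j ≤ ⨆ j, d i j * y j)
    (hx3 : ∀ i j, 0 ≤ x i j)
    (k : Fin m → Fin n)
    (hk1 : ∀ i, y (k i) = 1)
    (hk2 : ∀ i j, y j = 1 → d i j ≤ d i (k i)) :
    (∀ j, ∑ i, x i j ≤ c j * y j) ∧
    (∀ i, ∑ j, x i j ≤ ∑ j, d i j * (if j = k i then (1 : ℝ) else 0)) ∧
    (∀ i, ∑ j, (if j = k i then (1 : ℝ) else 0) ≤ 1) ∧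
    (∀ i j, (if j = k i then (1 : ℝ) else 0) ≤ y j) ∧
    (∀ i j, (0 : ℝ) ≤ if j = k i then (1 : ℝ) else 0) ∧
    (∀ i j, 0 ≤ x i j) := by
  refine ⟨hx1, ?_, ?_, ?_, ?_, hx3⟩
  · intro i
    have hsum : ∑ j, d i j * (if j = k i then (1 : ℝ) else 0) = d i (k i) := by
      simp [mul_ite]
    rw [hsum]
    have : Nonempty (Fin n) := ⟨hy1.choose⟩
    refine (hx2 i).trans (ciSup_le fun j => ?_)
    rcases hy j with h | h
    · simp [h, hd i (k i)]
    · simpa [h] using hk2 i j h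
  · intro i; simp
  · intro i j
    rcases hy j with h | h
    · by_cases hj : j = k i
      · rw [hj] at h; rw [hk1 i] at h; norm_num at h
      · simp [hj, h]
    · split <;> simp [h]
  · intro i j; split <;> norm_num
end

section
/- For any subsets I ⊆ [m], J ⊊ [n] and any index j' ∈ [n] \ J, the inequality ∑_{i∈I} ∑_{j∈J∪{j'}} x_{ij} − (∑_{i∈I} max_{j∈[n]} d_{ij} − ∑_{j∈J} c_j) y_{j'} ≤ ∑_{j∈J} c_j is valid for every point of χ^L (hence for conv(χ^L)). -/
/-- Validity of the inequality
`∑_{i∈I} ∑_{j∈J∪{j'}} x_{ij} − (∑_{i∈I} max_{j∈[n]} d_{ij} − ∑_{j∈J} c_j) y_{j'} ≤ ∑_{j∈J} c_j`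
for every point of `χ^L`. -/
theorem stmt10 (m n : ℕ) (c : Fin n → ℝ) (hc : ∀ j, 0 < c j)
    (d : Fin m → Fin n → ℝ) (hd : ∀ i j, 0 < d i j)
    (I : Finset (Fin m)) (J : Finset (Fin n)) (j' : Fin n) (hj' : j' ∉ J)
    (x q : Fin m → Fin n → ℝ) (y : Fin n → ℝ)
    (hy : ∀ j, y j = 0 ∨ y j = 1)
    (h1 : ∀ j, ∑ i, x i j ≤ c j * y j)
    (h2 : ∀ i, ∑ j, x i j ≤ ∑ j, d i j * q i j)
    (h3 : ∀ i, ∑ j, q i j ≤ 1)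
    (h4 : ∀ i j, q i j ≤ y j)
    (h5 : ∀ i j, 0 ≤ q i j)
    (h6 : ∀ i j, 0 ≤ x i j) :
    ∑ i ∈ I, ∑ j ∈ insert j' J, x i j
      - (∑ i ∈ I, (⨆ j, d i j) - ∑ j ∈ J, c j) * y j' ≤ ∑ j ∈ J, c j := by
  have hsup : ∀ i j, d i j ≤ ⨆ k, d i k := fun i j =>
    le_ciSup (Set.Finite.bddAbove (Set.finite_range _)) j
  rcases hy j' with h0 | h1'
  · -- y j' = 0
    have hx0 : ∀ i, x i j' = 0 := by
      intro i
      have hle : ∑ i, x i j' ≤ 0 := by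
        have := h1 j'; rw [h0, mul_zero] at this; exact this
      have := (Finset.sum_eq_zero_iff_of_nonneg (fun i _ => h6 i j')).mp
        (le_antisymm hle (Finset.sum_nonneg fun i _ => h6 i j'))
      exact this i (Finset.mem_univ i)
    rw [h0, mul_zero, sub_zero]
    have : ∑ i ∈ I, ∑ j ∈ insert j' J, x i j = ∑ i ∈ I, ∑ j ∈ J, x i j := by
      refine Finset.sum_congr rfl fun i _ => ?_
      rw [Finset.sum_insert hj', hx0 i, zero_add]
    rw [this, Finset.sum_comm]
    calc ∑ j ∈ J, ∑ i ∈ I, x i j ≤ ∑ j ∈ J, ∑ i, x i j := by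
          refine Finset.sum_le_sum fun j _ => ?_
          exact Finset.sum_le_sum_of_subset_of_nonneg (Finset.subset_univ I)
            (fun i _ _ => h6 i j)
      _ ≤ ∑ j ∈ J, c j * y j := Finset.sum_le_sum fun j _ => h1 j
      _ ≤ ∑ j ∈ J, c j := by
          refine Finset.sum_le_sum fun j _ => ?_
          rcases hy j with h | h
          · rw [h, mul_zero]; exact (hc j).le
          · rw [h, mul_one]
  · -- y j' = 1
    rw [h1', mul_one]
    have key : ∑ i ∈ I, ∑ j ∈ insert j' J, x i j ≤ ∑ i ∈ I, ⨆ j, d i j := by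
      refine Finset.sum_le_sum fun i _ => ?_
      calc ∑ j ∈ insert j' J, x i j ≤ ∑ j, x i j :=
            Finset.sum_le_sum_of_subset_of_nonneg (Finset.subset_univ _)
              (fun j _ _ => h6 i j)
        _ ≤ ∑ j, d i j * q i j := h2 i
        _ ≤ ∑ j, (⨆ k, d i k) * q i j :=
            Finset.sum_le_sum fun j _ => mul_le_mul_of_nonneg_right (hsup i j) (h5 i j)
        _ = (⨆ k, d i k) * ∑ j, q i j := by rw [Finset.mul_sum]
        _ ≤ (⨆ k, d i k) * 1 := by
            refine mul_le_mul_of_nonneg_left (h3 i) ?_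
            exact le_trans (hd i j').le (hsup i j')
        _ = ⨆ k, d i k := mul_one _
    linarith
end

section
/- Let I ⊆ [m] and J ⊊ [n] with ∑_{j∈J} c_j ≤ ∑_{i∈I} max_{j∈J} d_{ij}. Then the inequality ∑_{i∈I} ∑_{j∈[n]} x_{ij} − ∑_{j'∈[n]\J} (∑_{i∈I} max_{j∈J∪{j'}} d_{ij} − ∑_{j∈J} c_j) y_{j'} ≤ ∑_{j∈J} c_j is valid for every point of χ^L. -/
/-- Validity of the inequality
`∑_{i∈I} ∑_{j∈[n]} x_{ij} − ∑_{j'∉J} (∑_{i∈I} max_{j∈J∪{j'}} d_{ij} − ∑_{j∈J} c_j) y_{j'}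
  ≤ ∑_{j∈J} c_j` for every point of `χ^L`, when `∑_{j∈J} c_j ≤ ∑_{i∈I} max_{j∈J} d_{ij}`. -/
theorem stmt11 (m n : ℕ) (c : Fin n → ℝ) (hc : ∀ j, 0 < c j)
    (d : Fin m → Fin n → ℝ) (hd : ∀ i j, 0 < d i j)
    (I : Finset (Fin m)) (J : Finset (Fin n)) (hJne : J.Nonempty) (hJprop : J ≠ Finset.univ)
    (hcond : ∑ j ∈ J, c j ≤ ∑ i ∈ I, J.sup' hJne (d i))
    (x q : Fin m → Fin n → ℝ) (y : Fin n → ℝ)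
    (hy : ∀ j, y j = 0 ∨ y j = 1)
    (h1 : ∀ j, ∑ i, x i j ≤ c j * y j)
    (h2 : ∀ i, ∑ j, x i j ≤ ∑ j, d i j * q i j)
    (h3 : ∀ i, ∑ j, q i j ≤ 1)
    (h4 : ∀ i j, q i j ≤ y j)
    (h5 : ∀ i j, 0 ≤ q i j)
    (h6 : ∀ i j, 0 ≤ x i j) :
    ∑ i ∈ I, ∑ j, x i j
      - ∑ j' ∈ Jᶜ, (∑ i ∈ I, (insert j' J).sup' (Finset.insert_nonempty j' J) (d i)
          - ∑ j ∈ J, c j) * y j'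
      ≤ ∑ j ∈ J, c j := by
  classical
  set J' : Finset (Fin n) := Jᶜ.filter (fun j => y j = 1) with hJ'def
  have hysum : ∑ j' ∈ Jᶜ, (∑ i ∈ I, (insert j' J).sup' (Finset.insert_nonempty j' J) (d i)
      - ∑ j ∈ J, c j) * y j'
      = ∑ j' ∈ J', (∑ i ∈ I, (insert j' J).sup' (Finset.insert_nonempty j' J) (d i)
      - ∑ j ∈ J, c j) := by
    rw [hJ'def, Finset.sum_filter]
    refine Finset.sum_congr rfl (fun j hj => ?_)
    rcases hy j with h0 | h1'
    · simp [h0]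
    · simp [h1']
  rw [hysum]
  by_cases hJ'ne : J'.Nonempty
  · -- J' nonempty
    have neU : (J ∪ J').Nonempty := hJne.mono Finset.subset_union_left
    have hMpos : ∀ i, 0 < (J ∪ J').sup' neU (d i) := by
      intro i
      obtain ⟨j, hj⟩ := hJne
      exact lt_of_lt_of_le (hd i j) (Finset.le_sup' _ (Finset.mem_union_left _ hj))
    have hstepA : ∀ i, ∑ j, x i j ≤ (J ∪ J').sup' neU (d i) := by
      intro i
      calc ∑ j, x i j ≤ ∑ j, d i j * q i j := h2 i
        _ ≤ ∑ j, (J ∪ J').sup' neU (d i) * q i j := by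
            refine Finset.sum_le_sum (fun j _ => ?_)
            by_cases hjm : j ∈ J ∪ J'
            · exact mul_le_mul_of_nonneg_right (Finset.le_sup' _ hjm) (h5 i j)
            · have hy0 : y j = 0 := by
                rcases hy j with h0 | h1'
                · exact h0
                · exact absurd (Finset.mem_union_right _ (Finset.mem_filter.2
                    ⟨Finset.mem_compl.2 (fun hJ => hjm (Finset.mem_union_left _ hJ)), h1'⟩)) hjm
              have hq0 : q i j = 0 := le_antisymm (by rw [← hy0]; exact h4 i j) (h5 i j)
              rw [hq0]; simp
        _ = (J ∪ J').sup' neU (d i) * ∑ j, q i j := by rw [Finset.mul_sum]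
        _ ≤ (J ∪ J').sup' neU (d i) * 1 :=
            mul_le_mul_of_nonneg_left (h3 i) (le_of_lt (hMpos i))
        _ = _ := mul_one _
    have hAle : ∀ i, ∀ j' : Fin n, J.sup' hJne (d i)
        ≤ (insert j' J).sup' (Finset.insert_nonempty j' J) (d i) := fun i j' =>
      Finset.sup'_le _ _ (fun b hb => Finset.le_sup' _ (Finset.mem_insert_of_mem hb))
    have hkey : ∀ i, (J ∪ J').sup' neU (d i) + ((J'.card : ℝ) - 1) * J.sup' hJne (d i)
        ≤ ∑ j' ∈ J', (insert j' J).sup' (Finset.insert_nonempty j' J) (d i) := by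
      intro i
      obtain ⟨j0, hj0mem, hj0⟩ := Finset.exists_mem_eq_sup' neU (d i)
      obtain ⟨js, hjs, hfjs⟩ : ∃ js ∈ J', (J ∪ J').sup' neU (d i)
          ≤ (insert js J).sup' (Finset.insert_nonempty js J) (d i) := by
        rcases Finset.mem_union.1 hj0mem with hJ0 | hJ'0
        · obtain ⟨js, hjs⟩ := hJ'ne
          exact ⟨js, hjs, by rw [hj0]; exact Finset.le_sup' _ (Finset.mem_insert_of_mem hJ0)⟩
        · exact ⟨j0, hJ'0, by rw [hj0]; exact Finset.le_sup' _ (Finset.mem_insert_self _ _)⟩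
      have hrest : ((J'.card : ℝ) - 1) * J.sup' hJne (d i)
          ≤ ∑ j' ∈ J'.erase js, (insert j' J).sup' (Finset.insert_nonempty j' J) (d i) := by
        have h1c : ((J'.erase js).card : ℝ) = (J'.card : ℝ) - 1 := by
          rw [Finset.card_erase_of_mem hjs, Nat.cast_sub (Finset.one_le_card.2 hJ'ne)]
          simp
        calc ((J'.card : ℝ) - 1) * J.sup' hJne (d i)
            = ∑ _j' ∈ J'.erase js, J.sup' hJne (d i) := by
              rw [Finset.sum_const, nsmul_eq_mul, h1c]
          _ ≤ _ := Finset.sum_le_sum (fun j' _ => hAle i j')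
      calc (J ∪ J').sup' neU (d i) + ((J'.card : ℝ) - 1) * J.sup' hJne (d i)
          ≤ (insert js J).sup' (Finset.insert_nonempty js J) (d i)
            + ∑ j' ∈ J'.erase js, (insert j' J).sup' (Finset.insert_nonempty j' J) (d i) :=
            add_le_add hfjs hrest
        _ = ∑ j' ∈ J', (insert j' J).sup' (Finset.insert_nonempty j' J) (d i) :=
            (Finset.add_sum_erase J'
              (fun j' => (insert j' J).sup' (Finset.insert_nonempty j' J) (d i)) hjs)
    have hA : ∑ i ∈ I, ∑ j, x i j ≤ ∑ i ∈ I, (J ∪ J').sup' neU (d i) :=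
      Finset.sum_le_sum (fun i _ => hstepA i)
    have hK : ∑ i ∈ I, ((J ∪ J').sup' neU (d i) + ((J'.card : ℝ) - 1) * J.sup' hJne (d i))
        ≤ ∑ i ∈ I, ∑ j' ∈ J', (insert j' J).sup' (Finset.insert_nonempty j' J) (d i) :=
      Finset.sum_le_sum (fun i _ => hkey i)
    rw [Finset.sum_add_distrib, ← Finset.mul_sum] at hK
    have hswap : ∑ i ∈ I, ∑ j' ∈ J', (insert j' J).sup' (Finset.insert_nonempty j' J) (d i)
        = ∑ j' ∈ J', ∑ i ∈ I, (insert j' J).sup' (Finset.insert_nonempty j' J) (d i) :=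
      Finset.sum_comm
    rw [hswap] at hK
    have hsub : ∑ j' ∈ J', (∑ i ∈ I, (insert j' J).sup' (Finset.insert_nonempty j' J) (d i)
        - ∑ j ∈ J, c j)
        = ∑ j' ∈ J', ∑ i ∈ I, (insert j' J).sup' (Finset.insert_nonempty j' J) (d i)
          - (J'.card : ℝ) * ∑ j ∈ J, c j := by
      rw [Finset.sum_sub_distrib, Finset.sum_const, nsmul_eq_mul]
    rw [hsub]
    have hk1 : (1 : ℝ) ≤ (J'.card : ℝ) := by
      exact_mod_cast Finset.one_le_card.2 hJ'ne
    nlinarith [mul_le_mul_of_nonneg_left hcond (by linarith : (0:ℝ) ≤ (J'.card : ℝ) - 1)]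
  · -- J' empty: all y = 0 off J
    rw [Finset.not_nonempty_iff_eq_empty] at hJ'ne
    rw [hJ'ne, Finset.sum_empty, sub_zero]
    have hx0 : ∀ i j, j ∉ J → x i j = 0 := by
      intro i j hj
      have hy0 : y j = 0 := by
        rcases hy j with h0 | h1'
        · exact h0
        · exfalso
          have hmem : j ∈ J' := by
            rw [hJ'def]; exact Finset.mem_filter.2 ⟨Finset.mem_compl.2 hj, h1'⟩
          rw [hJ'ne] at hmem
          exact Finset.notMem_empty j hmem
      have hle : x i j ≤ ∑ i', x i' j :=
        Finset.single_le_sum (fun i' _ => h6 i' j) (Finset.mem_univ i)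
      have := h1 j
      rw [hy0, mul_zero] at this
      exact le_antisymm (by linarith) (h6 i j)
    have hrow : ∀ i, ∑ j, x i j = ∑ j ∈ J, x i j := by
      intro i
      rw [← Finset.sum_filter_add_sum_filter_not Finset.univ (· ∈ J) (x i)]
      have : ∑ j ∈ Finset.univ.filter (· ∉ J), x i j = 0 :=
        Finset.sum_eq_zero (fun j hj => hx0 i j (Finset.mem_filter.1 hj).2)
      rw [this, add_zero]
      congr 1
      ext j; simp
    calc ∑ i ∈ I, ∑ j, x i j = ∑ i ∈ I, ∑ j ∈ J, x i j := by
          exact Finset.sum_congr rfl (fun i _ => hrow i)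
      _ = ∑ j ∈ J, ∑ i ∈ I, x i j := Finset.sum_comm
      _ ≤ ∑ j ∈ J, ∑ i, x i j := by
          refine Finset.sum_le_sum (fun j _ => ?_)
          exact Finset.sum_le_sum_of_subset_of_nonneg (Finset.subset_univ I)
            (fun i _ _ => h6 i j)
      _ ≤ ∑ j ∈ J, c j * y j := Finset.sum_le_sum (fun j _ => h1 j)
      _ ≤ ∑ j ∈ J, c j := by
          refine Finset.sum_le_sum (fun j _ => ?_)
          rcases hy j with h0 | h1'
          · rw [h0, mul_zero]; exact le_of_lt (hc j)
          · rw [h1', mul_one]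
end

section
/- Let I ⊆ [m], J ⊆ [n] satisfy: (i) ∑_{j∈J} c_j > ∑_{i∈I} max_{j∈J} d_{ij}, (ii) max_{j∈[n]} d_{ij} = max_{j∈J} d_{ij} for all i ∈ I, and (iii) ∑_{j∈J\{j_0}} c_j < ∑_{i∈I} max_{j∈J\{j_0}} d_{ij} for every j_0 ∈ J. Then the inequality ∑_{i∈I} ∑_{j∈J} x_{ij} + ∑_{j∈J} (∑_{j'∈J\{j}} c_{j'} − ∑_{i∈I} max_{j'∈J} d_{ij'}) y_j ≤ (|J| − 1)(∑_{j∈J} c_j − ∑_{i∈I} max_{j'∈J} d_{ij'}) is valid for every point of χ^L. -/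
/-- Validity of the facet-defining inequality of Theorem 3 (critical `(I,J)`):
`∑_{i∈I} ∑_{j∈J} x_{ij} + ∑_{j∈J} (∑_{j'∈J\{j}} c_{j'} − ∑_{i∈I} max_{j'∈J} d_{ij'}) y_j
  ≤ (|J|−1)(∑_{j∈J} c_j − ∑_{i∈I} max_{j'∈J} d_{ij'})` for every point of `χ^L`. -/
theorem stmt12 (m n : ℕ) (c : Fin n → ℝ) (hc : ∀ j, 0 < c j)
    (d : Fin m → Fin n → ℝ) (hd : ∀ i j, 0 < d i j)
    (I : Finset (Fin m)) (J : Finset (Fin n)) (hJne : J.Nonempty) (hJ2 : 2 ≤ J.card)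
    (cond1 : ∑ i ∈ I, J.sup' hJne (d i) < ∑ j ∈ J, c j)
    (cond2 : ∀ i ∈ I, (⨆ j, d i j) = J.sup' hJne (d i))
    (cond3 : ∀ j0, ∀ hj0 : j0 ∈ J, ∑ j ∈ J.erase j0, c j <
      ∑ i ∈ I, (J.erase j0).sup'
        (by rw [← Finset.card_pos, Finset.card_erase_of_mem hj0]; omega) (d i))
    (x q : Fin m → Fin n → ℝ) (y : Fin n → ℝ)
    (hy : ∀ j, y j = 0 ∨ y j = 1)
    (h1 : ∀ j, ∑ i, x i j ≤ c j * y j)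
    (h2 : ∀ i, ∑ j, x i j ≤ ∑ j, d i j * q i j)
    (h3 : ∀ i, ∑ j, q i j ≤ 1)
    (h4 : ∀ i j, q i j ≤ y j)
    (h5 : ∀ i j, 0 ≤ q i j)
    (h6 : ∀ i j, 0 ≤ x i j) :
    ∑ i ∈ I, ∑ j ∈ J, x i j
      + ∑ j ∈ J, (∑ j' ∈ J.erase j, c j' - ∑ i ∈ I, J.sup' hJne (d i)) * y j
      ≤ ((J.card : ℝ) - 1) * (∑ j ∈ J, c j - ∑ i ∈ I, J.sup' hJne (d i)) := by
  set D := ∑ i ∈ I, J.sup' hJne (d i) with hDdef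
  set C := ∑ j ∈ J, c j with hCdef
  have hErase : ∀ j ∈ J, ∑ j' ∈ J.erase j, c j' = C - c j := fun j hj =>
    Finset.sum_erase_eq_sub hj
  have hxcol : ∀ j, ∑ i ∈ I, x i j ≤ c j * y j := by
    intro j
    calc ∑ i ∈ I, x i j
        ≤ ∑ i, x i j := Finset.sum_le_sum_of_subset_of_nonneg (Finset.subset_univ I)
          (fun i _ _ => h6 i j)
      _ ≤ c j * y j := h1 j
  by_cases hall : ∀ j ∈ J, y j = 1
  · -- case J₀ = ∅ : all facilities in J open
    have hx : ∑ i ∈ I, ∑ j ∈ J, x i j ≤ D := by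
      apply Finset.sum_le_sum
      intro i hi
      have hM : ∀ j, d i j ≤ J.sup' hJne (d i) := by
        intro j
        rw [← cond2 i hi]
        exact le_ciSup (Set.Finite.bddAbove (Set.finite_range _)) j
      obtain ⟨j1, hj1⟩ := id hJne
      have h0M : (0:ℝ) ≤ J.sup' hJne (d i) :=
        (hd i j1).le.trans (Finset.le_sup' (d i) hj1)
      calc ∑ j ∈ J, x i j
          ≤ ∑ j, x i j := Finset.sum_le_sum_of_subset_of_nonneg (Finset.subset_univ J)
            (fun j _ _ => h6 i j)
        _ ≤ ∑ j, d i j * q i j := h2 i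
        _ ≤ ∑ j, J.sup' hJne (d i) * q i j :=
            Finset.sum_le_sum (fun j _ => mul_le_mul_of_nonneg_right (hM j) (h5 i j))
        _ = J.sup' hJne (d i) * ∑ j, q i j := by rw [Finset.mul_sum]
        _ ≤ J.sup' hJne (d i) * 1 := mul_le_mul_of_nonneg_left (h3 i) h0M
        _ = J.sup' hJne (d i) := mul_one _
    have hsnd : ∑ j ∈ J, (∑ j' ∈ J.erase j, c j' - D) * y j
        = (J.card : ℝ) * (C - D) - C := by
      rw [Finset.sum_congr rfl (fun j hj => by rw [hall j hj, mul_one, hErase j hj])]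
      rw [Finset.sum_sub_distrib, Finset.sum_sub_distrib, Finset.sum_const, Finset.sum_const]
      simp [mul_sub, ← hCdef]
      ring
    rw [hsnd]
    have hk : (1:ℝ) ≤ (J.card : ℝ) := by exact_mod_cast Nat.one_le_of_lt hJ2
    nlinarith [hx, cond1]
  · -- some j0 ∈ J with y j0 = 0
    push_neg at hall
    obtain ⟨j0, hj0, hyne⟩ := hall
    have hy0 : y j0 = 0 := (hy j0).resolve_right hyne
    have hstep : ∑ i ∈ I, ∑ j ∈ J, x i j
        + ∑ j ∈ J, (∑ j' ∈ J.erase j, c j' - D) * y j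
        ≤ ∑ j ∈ J, (C - D) * y j := by
      rw [Finset.sum_comm, ← Finset.sum_add_distrib]
      apply Finset.sum_le_sum
      intro j hj
      rw [hErase j hj]
      have := hxcol j
      ring_nf
      nlinarith [hxcol j]
    have hysum : ∑ j ∈ J, y j ≤ (J.card : ℝ) - 1 := by
      have : ∑ j ∈ J, y j = ∑ j ∈ J.erase j0, y j := by
        rw [← Finset.add_sum_erase J y hj0, hy0, zero_add]
      rw [this]
      calc ∑ j ∈ J.erase j0, y j ≤ ∑ _j ∈ J.erase j0, (1:ℝ) :=
            Finset.sum_le_sum (fun j _ => by rcases hy j with h | h <;> simp [h])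
        _ = ((J.erase j0).card : ℝ) := by simp
        _ = (J.card : ℝ) - 1 := by
            rw [Finset.card_erase_of_mem hj0]
            have : 1 ≤ J.card := Nat.one_le_of_lt hJ2
            push_cast [Nat.cast_sub this]
            ring
    calc ∑ i ∈ I, ∑ j ∈ J, x i j
        + ∑ j ∈ J, (∑ j' ∈ J.erase j, c j' - D) * y j
        ≤ ∑ j ∈ J, (C - D) * y j := hstep
      _ = (C - D) * ∑ j ∈ J, y j := by rw [Finset.mul_sum]
      _ ≤ (C - D) * ((J.card : ℝ) - 1) := by
          apply mul_le_mul_of_nonneg_left hysum (by linarith [cond1])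
      _ = ((J.card : ℝ) - 1) * (C - D) := by ring
end

section
/- Let J_0 ⊊ J with 2 ≤ |J_0| ≤ |J| − 1 and suppose ∑_{j∈J} c_j ≥ ∑_{i∈I} max_{j'∈J} d_{ij'}. Then (|J|−1)(∑_{j∈J} c_j − ∑_{i∈I} max_{j'∈J} d_{ij'}) − ∑_{j∈J\J_0} (∑_{j'∈J\{j}} c_{j'} − ∑_{i∈I} max_{j'∈J} d_{ij'}) ≥ ∑_{j∈J\J_0} c_j. -/
/-- The key algebraic inequality in the validity proof of the facet-defining
inequality, for `J₀ ⊊ J` with `2 ≤ |J₀| ≤ |J| − 1` and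
`∑_{j∈J} c_j ≥ ∑_{i∈I} max_{j'∈J} d_{ij'}`. -/
theorem stmt14 (m n : ℕ) (c : Fin n → ℝ) (hc : ∀ j, 0 < c j)
    (d : Fin m → Fin n → ℝ) (hd : ∀ i j, 0 < d i j)
    (I : Finset (Fin m)) (J J0 : Finset (Fin n)) (hJne : J.Nonempty)
    (hJ0 : J0 ⊂ J) (hJ0lo : 2 ≤ J0.card) (hJ0hi : J0.card ≤ J.card - 1)
    (hcond : ∑ i ∈ I, J.sup' hJne (d i) ≤ ∑ j ∈ J, c j) :
    ((J.card : ℝ) - 1) * (∑ j ∈ J, c j - ∑ i ∈ I, J.sup' hJne (d i))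
      - ∑ j ∈ J \ J0, (∑ j' ∈ J.erase j, c j' - ∑ i ∈ I, J.sup' hJne (d i))
      ≥ ∑ j ∈ J \ J0, c j := by
  set S : ℝ := ∑ j ∈ J, c j with hS
  set M : ℝ := ∑ i ∈ I, J.sup' hJne (d i) with hM
  have hsub : J \ J0 ⊆ J := Finset.sdiff_subset
  have h1 : ∑ j ∈ J \ J0, (∑ j' ∈ J.erase j, c j' - M)
      = ((J \ J0).card : ℝ) * (S - M) - ∑ j ∈ J \ J0, c j := by
    have : ∀ j ∈ J \ J0, (∑ j' ∈ J.erase j, c j' - M) = (S - M) - c j := by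
      intro j hj
      have := Finset.sum_erase_add J c (hsub hj)
      linarith
    rw [Finset.sum_congr rfl this, Finset.sum_sub_distrib, Finset.sum_const,
      nsmul_eq_mul]
  rw [h1]
  have hcard : (J \ J0).card = J.card - J0.card := Finset.card_sdiff_of_subset hJ0.subset
  have hlt : J0.card < J.card := Finset.card_lt_card hJ0
  have hk : ((J \ J0).card : ℝ) ≤ (J.card : ℝ) - 1 := by
    have hk' : (J \ J0).card + 1 ≤ J.card := by omega
    have : ((J \ J0).card : ℝ) + 1 ≤ (J.card : ℝ) := by exact_mod_cast hk'
    linarith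
  have hSM : 0 ≤ S - M := by linarith
  nlinarith [mul_nonneg (sub_nonneg.2 hk) hSM]
end

section
/- Let P ⊆ R^m and Q ⊆ R^{m+n} be full-dimensional polytopes with P = proj_x Q (projection onto the first m coordinates). If the inequality αᵀx + β ≤ 0 (involving only the x variables) is valid for Q, then it is valid for P; and if it defines a facet of Q whose affine hull does not contain the origin, then it defines a facet of P. -/
/-!
The points of `Q` on the facet are affinely independent and their affine hull misses the origin,
so they are linearly independent; being `m + n` of them, they span `ℝ^m × ℝ^n`. Their projections
then span `ℝ^m`, so some `m` of the projected points form a basis; these lie in `P`, are linearly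
(hence affinely) independent and satisfy the inequality with equality, since it only involves `x`.
-/

open Module Submodule Set

theorem AffineIndependent.linearIndependent_of_zero_notMem_affineSpan {ι k V : Type*} [Field k]
    [AddCommGroup V] [Module k V] [Fintype ι] {p : ι → V} (hp : AffineIndependent k p)
    (h0 : (0 : V) ∉ affineSpan k (range p)) : LinearIndependent k p := by
  classical
  rw [Fintype.linearIndependent_iff]
  intro w hw
  by_cases hs : ∑ i, w i = 0
  · exact fun i => affineIndependent_iff.1 hp Finset.univ w hs hw i (Finset.mem_univ i)
  · -- rescaled to total weight one, `w` exhibits `0` as an affine combination of the `p i`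
    have hw1 : ∑ i, w i / ∑ j, w j = 1 := by rw [← Finset.sum_div, div_self hs]
    refine absurd ?_ h0
    convert affineCombination_mem_affineSpan hw1 p
    rw [Finset.univ.affineCombination_eq_linear_combination p _ hw1]
    simp_rw [div_eq_inv_mul, ← smul_smul, ← Finset.smul_sum, hw, smul_zero]

theorem Submodule.span_range_comp_eq_top_of_surjective {ι R M N : Type*} [Semiring R]
    [AddCommMonoid M] [AddCommMonoid N] [Module R M] [Module R N] {f : M →ₗ[R] N}
    (hf : Function.Surjective f) {v : ι → M} (hv : span R (range v) = ⊤) :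
    span R (range (f ∘ v)) = ⊤ := by
  rw [range_comp, span_image, hv, Submodule.map_top, LinearMap.range_eq_top.2 hf]

theorem exists_linearIndependent_comp_of_span_eq_top {ι K V : Type*} [Field K] [AddCommGroup V]
    [Module K V] [Finite ι] (v : ι → V) (hv : span K (range v) = ⊤) :
    ∃ s : Fin (finrank K V) → ι, LinearIndependent K (v ∘ s) := by
  obtain ⟨κ, a, ha, hspan, hli⟩ := exists_linearIndependent' K v
  have : Finite κ := .of_injective a ha
  have : Fintype κ := .ofFinite κ
  let b := Basis.mk hli (by rw [hspan, hv])
  let e : κ ≃ Fin (finrank K V) := Fintype.equivFinOfCardEq (finrank_eq_card_basis b).symm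
  exact ⟨a ∘ e.symm, hli.comp e.symm e.symm.injective⟩

theorem stmt16_general (m n : ℕ)
    (Q : Set ((Fin m → ℝ) × (Fin n → ℝ)))
    (P : Set (Fin m → ℝ)) (hP : P = Prod.fst '' Q)
    (α : Fin m → ℝ) (β : ℝ)
    (hvalid : ∀ p ∈ Q, ∑ i, α i * p.1 i + β ≤ 0) :
    (∀ z ∈ P, ∑ i, α i * z i + β ≤ 0) ∧
    (∀ pts : Fin (m + n) → (Fin m → ℝ) × (Fin n → ℝ),
      (∀ k, pts k ∈ Q) →
      (∀ k, ∑ i, α i * (pts k).1 i + β = 0) →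
      AffineIndependent ℝ pts →
      (0 : (Fin m → ℝ) × (Fin n → ℝ)) ∉ affineSpan ℝ (Set.range pts) →
      ∃ pts' : Fin m → (Fin m → ℝ),
        (∀ k, pts' k ∈ P) ∧ (∀ k, ∑ i, α i * pts' k i + β = 0) ∧
        AffineIndependent ℝ pts') := by
  subst hP
  refine ⟨fun _ ⟨p, hp, hpz⟩ => hpz ▸ hvalid p hp, fun pts hmem heq hindep h0 => ?_⟩
  have hspan : span ℝ (range pts) = ⊤ :=
    (hindep.linearIndependent_of_zero_notMem_affineSpan h0).span_eq_top_of_card_eq_finrank'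
      (by simp)
  have hspan_fst : span ℝ (range (LinearMap.fst ℝ _ _ ∘ pts)) = ⊤ :=
    span_range_comp_eq_top_of_surjective LinearMap.fst_surjective hspan
  obtain ⟨s, hs⟩ := exists_linearIndependent_comp_of_span_eq_top _ hspan_fst
  let s' : Fin m → Fin (m + n) := s ∘ Fin.cast (by simp)
  refine ⟨fun k => (pts (s' k)).1, fun k => ⟨pts (s' k), hmem _, rfl⟩, fun k => heq _, ?_⟩
  exact (hs.comp _ (Fin.cast_injective _)).affineIndependent

/-- Facet extension under projection: if `P = proj_x Q` for full-dimensional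
polytopes `P ⊆ ℝ^m`, `Q ⊆ ℝ^{m+n}`, and `αᵀx + β ≤ 0` (in the `x` variables only)
is valid for `Q`, then it is valid for `P`; moreover, if it is facet-defining for
`Q` — witnessed by `m+n` affinely independent points of `Q` on the hyperplane,
whose affine hull does not contain the origin — then it is facet-defining for `P`,
i.e. there are `m` affinely independent points of `P` satisfying it with equality. -/
theorem stmt16 (m n : ℕ)
    (Q : Set ((Fin m → ℝ) × (Fin n → ℝ)))
    (SQ : Set ((Fin m → ℝ) × (Fin n → ℝ))) (hSQ : SQ.Finite) (hQpoly : Q = convexHull ℝ SQ)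
    (hQfull : affineSpan ℝ Q = ⊤)
    (P : Set (Fin m → ℝ)) (hP : P = Prod.fst '' Q)
    (SP : Set (Fin m → ℝ)) (hSP : SP.Finite) (hPpoly : P = convexHull ℝ SP)
    (hPfull : affineSpan ℝ P = ⊤)
    (α : Fin m → ℝ) (β : ℝ)
    (hvalid : ∀ p ∈ Q, ∑ i, α i * p.1 i + β ≤ 0) :
    (∀ z ∈ P, ∑ i, α i * z i + β ≤ 0) ∧
    (∀ pts : Fin (m + n) → (Fin m → ℝ) × (Fin n → ℝ),
      (∀ k, pts k ∈ Q) →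
      (∀ k, ∑ i, α i * (pts k).1 i + β = 0) →
      AffineIndependent ℝ pts →
      (0 : (Fin m → ℝ) × (Fin n → ℝ)) ∉ affineSpan ℝ (Set.range pts) →
      ∃ pts' : Fin m → (Fin m → ℝ),
        (∀ k, pts' k ∈ P) ∧ (∀ k, ∑ i, α i * pts' k i + β = 0) ∧
        AffineIndependent ℝ pts') :=
  stmt16_general m n Q P hP α β hvalid
end

section
/- The polytope conv(χ^L) is full-dimensional: its dimension equals (2m+1)n, witnessed by the (2m+1)n + 1 affinely independent points [0,0,0], [0,e_j,0] for j ∈ [n], [0,e_j,e_{ij}] for i ∈ [m], j ∈ [n], and [ε e_{ij}, e_j, e_{ij}] for i ∈ [m], j ∈ [n], where 0 < ε < min{d_{ij}, c_j}. -/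
open Finset

namespace Stmt17Aux

abbrev I (m n : ℕ) := Fin n ⊕ (Fin m × Fin n) ⊕ (Fin m × Fin n)
abbrev V (m n : ℕ) := (Fin m → Fin n → ℝ) × (Fin n → ℝ) × (Fin m → Fin n → ℝ)

noncomputable def F (m n : ℕ) (ε : ℝ) : V m n →ₗ[ℝ] (I m n → ℝ) where
  toFun p := Sum.elim
      (fun j => p.2.1 j - ∑ i, p.2.2 i j)
      (Sum.elim (fun q => p.2.2 q.1 q.2 - p.1 q.1 q.2 / ε)
        (fun q => p.1 q.1 q.2 / ε))
  map_add' p q := by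
    funext o; rcases o with j | q | q <;>
      simp [Finset.sum_add_distrib, add_div] <;> ring
  map_smul' r p := by
    funext o; rcases o with j | q | q <;>
      simp [← Finset.mul_sum, mul_div_assoc] <;> ring

def v (m n : ℕ) (ε : ℝ) : I m n → V m n :=
  Sum.elim
    (fun j => (0, Pi.single j 1, 0))
    (Sum.elim
      (fun p => (0, Pi.single p.2 1,
        fun i' j' => if i' = p.1 ∧ j' = p.2 then (1 : ℝ) else 0))
      (fun p => (fun i' j' => if i' = p.1 ∧ j' = p.2 then ε else 0,
        Pi.single p.2 1,
        fun i' j' => if i' = p.1 ∧ j' = p.2 then (1 : ℝ) else 0)))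

lemma F_v (m n : ℕ) (ε : ℝ) (hε : ε ≠ 0) (a : I m n) :
    F m n ε (v m n ε a) = Pi.single a 1 := by
  funext o
  rcases a with j | ⟨i, j⟩ | ⟨i, j⟩ <;> rcases o with j' | ⟨i', j'⟩ | ⟨i', j'⟩ <;>
    simp [F, v, Pi.single_apply, Finset.sum_ite_eq', Finset.filter_eq, Finset.filter_eq', Prod.ext_iff, hε,
      and_comm, eq_comm] <;>
    try split <;> simp_all [div_self, hε, Finset.filter_eq, Finset.filter_eq']

lemma lin_indep (m n : ℕ) (ε : ℝ) (hε : ε ≠ 0) :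
    LinearIndependent ℝ (v m n ε) := by
  have h : LinearIndependent ℝ (⇑(F m n ε) ∘ v m n ε) := by
    have : ⇑(F m n ε) ∘ v m n ε = fun a : I m n => Pi.single a (1:ℝ) := by
      funext a; exact F_v m n ε hε a
    rw [this, show (fun a : I m n => Pi.single a (1:ℝ)) = ⇑(Pi.basisFun ℝ (I m n))
      from funext fun a => by simp [Pi.basisFun_apply]]
    exact (Pi.basisFun ℝ (I m n)).linearIndependent
  exact h.of_comp (F m n ε)

def e (m n : ℕ) : I m n ≃ {x : Option (I m n) // x ≠ none} where
  toFun a := ⟨some a, by simp⟩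
  invFun x := x.1.get (Option.ne_none_iff_isSome.mp x.2)
  left_inv a := rfl
  right_inv x := by
    obtain ⟨x, hx⟩ := x
    cases x
    · simp at hx
    · rfl

lemma affine_indep (m n : ℕ) (ε : ℝ) (hε0 : ε ≠ 0) :
    AffineIndependent ℝ (fun o : Option (I m n) => Option.elim o 0 (v m n ε)) := by
  set P : Option (I m n) → V m n := fun o => Option.elim o 0 (v m n ε) with hP
  rw [affineIndependent_iff_linearIndependent_vsub ℝ P none]
  refine (linearIndependent_equiv' (e m n) ?_).mp (lin_indep m n ε hε0)
  funext a
  show P (some a) -ᵥ P none = v m n ε a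
  simp [P, vsub_eq_sub]

lemma mem_S {m n : ℕ} (c : Fin n → ℝ) (hc : ∀ j, 0 < c j)
    (d : Fin m → Fin n → ℝ) (hd : ∀ i j, 0 < d i j)
    (ε : ℝ) (hε : 0 < ε) (hεd : ∀ i j, ε < d i j) (hεc : ∀ j, ε < c j)
    (o : Option (I m n)) :
    Option.elim o 0 (v m n ε) ∈
      {p : V m n |
          (∀ j, ∑ i, p.1 i j ≤ c j * p.2.1 j) ∧
          (∀ i, ∑ j, p.1 i j ≤ ∑ j, d i j * p.2.2 i j) ∧
          (∀ i, ∑ j, p.2.2 i j ≤ 1) ∧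
          (∀ i j, p.2.2 i j ≤ p.2.1 j) ∧
          (∀ i j, 0 ≤ p.1 i j) ∧ (∀ i j, 0 ≤ p.2.2 i j) ∧
          (∀ j, p.2.1 j = 0 ∨ p.2.1 j = 1)} := by
  rcases o with _ | j | ⟨i, j⟩ | ⟨i, j⟩ <;>
    simp only [Set.mem_setOf_eq, Option.elim, v, Sum.elim_inl, Sum.elim_inr]
  · refine ⟨fun j => ?_, fun i => ?_, fun i => ?_, fun i j => ?_, fun i j => ?_,
      fun i j => ?_, fun j => ?_⟩ <;> simp
  · refine ⟨fun j' => ?_, fun i' => ?_, fun i' => ?_, fun i' j' => ?_, fun i' j' => ?_,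
      fun i' j' => ?_, fun j' => ?_⟩
    · have := (hc j').le
      simp only [Pi.zero_apply, Finset.sum_const_zero, Pi.single_apply]
      split
      · simpa using this
      · simp
    · simp
    · simp
    · rw [Pi.single_apply]; split <;> norm_num
    · simp
    · simp
    · rw [Pi.single_apply]; split <;> simp
  · refine ⟨fun j' => ?_, fun i' => ?_, fun i' => ?_, fun i' j' => ?_, fun i' j' => ?_,
      fun i' j' => ?_, fun j' => ?_⟩
    · have := (hc j').le
      simp only [Pi.zero_apply, Finset.sum_const_zero, Pi.single_apply]
      split
      · simpa using this
      · simp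
    · simp only [Pi.zero_apply, Finset.sum_const_zero]
      exact Finset.sum_nonneg fun j' _ =>
        mul_nonneg (hd i' j').le (by split <;> norm_num)
    · by_cases hi : i' = i <;> simp [hi, Finset.sum_ite_eq', Finset.sum_ite_eq]
    · split
      · rename_i h
        obtain ⟨rfl, rfl⟩ := h
        simp
      · rw [Pi.single_apply]; split <;> norm_num
    · simp
    · split <;> norm_num
    · rw [Pi.single_apply]; split <;> simp
  · refine ⟨fun j' => ?_, fun i' => ?_, fun i' => ?_, fun i' j' => ?_, fun i' j' => ?_,
      fun i' j' => ?_, fun j' => ?_⟩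
    · by_cases hj : j' = j
      · subst hj
        simp only [Pi.single_apply, and_true, if_pos rfl]
        calc (∑ i', if i' = i then ε else 0) = ε := by
              simp [Finset.sum_ite_eq', Finset.sum_ite_eq]
          _ ≤ c j' * 1 := by simpa using (hεc j').le
      · simp [hj, Pi.single_apply]
    · by_cases hi : i' = i
      · subst hi
        simp only [true_and]
        calc (∑ j', if j' = j then ε else 0) = ε := by
              simp [Finset.sum_ite_eq', Finset.sum_ite_eq]
          _ ≤ d i' j := (hεd i' j).le
          _ ≤ ∑ j', d i' j' * if j' = j then 1 else 0 := by
              simp [mul_ite, Finset.sum_ite_eq', Finset.sum_ite_eq]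
      · calc (∑ j', if i' = i ∧ j' = j then ε else 0) = 0 := by simp [hi]
          _ ≤ ∑ j', d i' j' * if i' = i ∧ j' = j then (1:ℝ) else 0 :=
              Finset.sum_nonneg fun j' _ =>
                mul_nonneg (hd i' j').le (by split <;> norm_num)
    · by_cases hi : i' = i <;> simp [hi, Finset.sum_ite_eq', Finset.sum_ite_eq]
    · split
      · rename_i h
        obtain ⟨rfl, rfl⟩ := h
        simp
      · rw [Pi.single_apply]; split <;> norm_num
    · split <;> simp [hε.le]
    · split <;> norm_num
    · rw [Pi.single_apply]; split <;> simp

lemma span_top (m n : ℕ) (ε : ℝ) (hε0 : ε ≠ 0)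
    (S : Set (V m n)) (hr : Set.range (fun o : Option (I m n) => Option.elim o 0 (v m n ε)) ⊆ S) :
    affineSpan ℝ S = ⊤ := by
  have hAI := affine_indep m n ε hε0
  have hfin : Module.finrank ℝ (Fin m → Fin n → ℝ) = m * n := by
    simp [Module.finrank_pi_fintype, Module.finrank_fintype_fun_eq_card,
      Finset.sum_const, mul_comm]
  have htop : affineSpan ℝ
      (Set.range (fun o : Option (I m n) => Option.elim o 0 (v m n ε))) = ⊤ := by
    rw [hAI.affineSpan_eq_top_iff_card_eq_finrank_add_one]
    simp only [Fintype.card_option, Fintype.card_sum, Fintype.card_prod, Fintype.card_fin,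
      Module.finrank_prod, hfin, Module.finrank_fintype_fun_eq_card]
    ring
  exact eq_top_iff.mpr (htop ▸ affineSpan_mono ℝ hr)

end Stmt17Aux

open Stmt17Aux

/-- Full-dimensionality of `conv(χ^L)`: the `(2m+1)n + 1` points
`[0,0,0]`, `[0,e_j,0]`, `[0,e_j,e_{ij}]`, `[ε e_{ij}, e_j, e_{ij}]`
(for `0 < ε < min{d_{ij}, c_j}`) all lie in `χ^L`, are affinely independent, and
hence the affine span of `χ^L` is the whole space. -/
theorem stmt17 (m n : ℕ) (c : Fin n → ℝ) (hc : ∀ j, 0 < c j)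
    (d : Fin m → Fin n → ℝ) (hd : ∀ i j, 0 < d i j)
    (ε : ℝ) (hε : 0 < ε) (hεd : ∀ i j, ε < d i j) (hεc : ∀ j, ε < c j) :
    (∀ o : Option (Fin n ⊕ (Fin m × Fin n) ⊕ (Fin m × Fin n)),
      Option.elim o
        ((0, 0, 0) : (Fin m → Fin n → ℝ) × (Fin n → ℝ) × (Fin m → Fin n → ℝ))
        (Sum.elim
          (fun j => (0, Pi.single j 1, 0))
          (Sum.elim
            (fun p => (0, Pi.single p.2 1,
              fun i' j' => if i' = p.1 ∧ j' = p.2 then (1 : ℝ) else 0))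
            (fun p => (fun i' j' => if i' = p.1 ∧ j' = p.2 then ε else 0,
              Pi.single p.2 1,
              fun i' j' => if i' = p.1 ∧ j' = p.2 then (1 : ℝ) else 0)))) ∈
        {p : (Fin m → Fin n → ℝ) × (Fin n → ℝ) × (Fin m → Fin n → ℝ) |
          (∀ j, ∑ i, p.1 i j ≤ c j * p.2.1 j) ∧
          (∀ i, ∑ j, p.1 i j ≤ ∑ j, d i j * p.2.2 i j) ∧
          (∀ i, ∑ j, p.2.2 i j ≤ 1) ∧
          (∀ i j, p.2.2 i j ≤ p.2.1 j) ∧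
          (∀ i j, 0 ≤ p.1 i j) ∧ (∀ i j, 0 ≤ p.2.2 i j) ∧
          (∀ j, p.2.1 j = 0 ∨ p.2.1 j = 1)}) ∧
    AffineIndependent ℝ
      (fun o : Option (Fin n ⊕ (Fin m × Fin n) ⊕ (Fin m × Fin n)) =>
        Option.elim o
          ((0, 0, 0) : (Fin m → Fin n → ℝ) × (Fin n → ℝ) × (Fin m → Fin n → ℝ))
          (Sum.elim
            (fun j => (0, Pi.single j 1, 0))
            (Sum.elim
              (fun p => (0, Pi.single p.2 1,
                fun i' j' => if i' = p.1 ∧ j' = p.2 then (1 : ℝ) else 0))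
              (fun p => (fun i' j' => if i' = p.1 ∧ j' = p.2 then ε else 0,
                Pi.single p.2 1,
                fun i' j' => if i' = p.1 ∧ j' = p.2 then (1 : ℝ) else 0))))) ∧
    affineSpan ℝ
        {p : (Fin m → Fin n → ℝ) × (Fin n → ℝ) × (Fin m → Fin n → ℝ) |
          (∀ j, ∑ i, p.1 i j ≤ c j * p.2.1 j) ∧
          (∀ i, ∑ j, p.1 i j ≤ ∑ j, d i j * p.2.2 i j) ∧
          (∀ i, ∑ j, p.2.2 i j ≤ 1) ∧
          (∀ i j, p.2.2 i j ≤ p.2.1 j) ∧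
          (∀ i j, 0 ≤ p.1 i j) ∧ (∀ i j, 0 ≤ p.2.2 i j) ∧
          (∀ j, p.2.1 j = 0 ∨ p.2.1 j = 1)} = ⊤ := by
  refine ⟨mem_S c hc d hd ε hε hεd hεc, affine_indep m n ε (ne_of_gt hε), ?_⟩
  exact span_top m n ε (ne_of_gt hε) _
    (by rintro _ ⟨o, rfl⟩; exact mem_S c hc d hd ε hε hεd hεc o)
end
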